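/- arXiv:math/0205263 — 5 statements merged into one kernel-verified Lean document; each statement's English description precedes it below -/
import Mathlib

section
/- In the affine Hecke algebra, defining ĝ_i = [X_i, g_i] = X_i g_i - g_i X_i, the intertwining relation ĝ_i X_j = X_{σ_i(j)} ĝ_i holds for all i, j, where σ_i is the transposition (i, i+1) acting on indices. -/
section AuxIntertwiner

variable {K : Type*} [Field K] {A : Type*} [Ring A] [Algebra K A]

private lemma hecke_key1 (c : K) (g Y : A)
    (h1 : g*Y*g*Y = Y*g*Y*g) (h2 : g*g = c • g + 1) :
    (Y*g - g*Y)*Y = g*Y*g*(Y*g - g*Y) := by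
  have e1 : g*Y*g*(Y*g - g*Y) = (g*Y*g*Y)*g - g*Y*(g*g)*Y := by noncomm_ring
  rw [e1, h1, h2]
  have e2 : Y*g*Y*g*g = Y*g*Y*(g*g) := by noncomm_ring
  rw [e2, h2]
  have e3 : g*Y*(c•g+1)*Y = c•(g*Y*g*Y) + g*Y*Y := by noncomm_ring
  rw [e3, h1]
  noncomm_ring

private lemma hecke_key2 (c : K) (g Y : A)
    (h1 : g*Y*g*Y = Y*g*Y*g) (h2 : g*g = c • g + 1) :
    (Y*g - g*Y)*(g*Y*g) = Y*(Y*g - g*Y) := by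
  have e1 : (Y*g - g*Y)*(g*Y*g) = Y*(g*g)*Y*g - (g*Y*g*Y)*g := by noncomm_ring
  rw [e1, h1, h2]
  have e2 : Y*g*Y*g*g = Y*g*Y*(g*g) := by noncomm_ring
  rw [e2, h2]
  have e3 : Y*(c•g+1)*Y*g = c•(Y*g*Y*g) + Y*Y*g := by noncomm_ring
  rw [e3]
  noncomm_ring

end AuxIntertwiner

/-- defining the intertwiner `ĝ i = X i * g i - g i * X i`, the
relation `ĝ i * X j = X (σ i j) * ĝ i` holds for all i, j ≥ 1, where σ i is
the transposition (i, i+1) acting on indices. -/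
theorem affine_hecke_intertwiner_relation
    {K : Type*} [Field K] {A : Type*} [Ring A] [Algebra K A]
    (q : K) (hq : q ≠ 0)
    (X : A) (g : ℕ → A)
    (hbraid : ∀ i ≥ 1, g i * g (i + 1) * g i = g (i + 1) * g i * g (i + 1))
    (hcomm : ∀ i j, 1 ≤ i → i + 2 ≤ j → g i * g j = g j * g i)
    (hquad : ∀ i ≥ 1,
      (g i - algebraMap K A q) * (g i + algebraMap K A q⁻¹) = 0)
    (hfour : g 1 * X * g 1 * X = X * g 1 * X * g 1)
    (hgX : ∀ j ≥ 2, g j * X = X * g j)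
    (Xs : ℕ → A) (hXs1 : Xs 1 = X)
    (hXsrec : ∀ j ≥ 1, Xs (j + 1) = g j * Xs j * g j) :
    ∀ i ≥ 1, ∀ j ≥ 1,
      (Xs i * g i - g i * Xs i) * Xs j =
        Xs (if j = i then i + 1 else if j = i + 1 then i else j) *
          (Xs i * g i - g i * Xs i) := by
  -- quadratic relation in usable form
  have hsq : ∀ i ≥ 1, g i * g i = (q - q⁻¹) • g i + 1 := by
    intro i hi
    have h := hquad i hi
    have hqq : (algebraMap K A q) * (algebraMap K A q⁻¹) = 1 := by
      rw [← map_mul, mul_inv_cancel₀ hq, map_one]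
    have hcq : g i * algebraMap K A q⁻¹ = algebraMap K A q⁻¹ * g i :=
      (Algebra.commutes q⁻¹ (g i)).symm
    rw [sub_mul, mul_add, mul_add, hcq, hqq] at h
    rw [sub_eq_zero] at h
    rw [Algebra.smul_def, map_sub, sub_mul]
    have h2 : algebraMap K A q * g i - algebraMap K A q⁻¹ * g i + 1 =
        (g i * g i + algebraMap K A q⁻¹ * g i) - algebraMap K A q⁻¹ * g i := by
      rw [h]; abel
    rw [h2]; abel
  -- g i commutes with Xs j for 1 ≤ j ≤ i - 1
  have hBlow : ∀ i j, 1 ≤ j → j + 1 ≤ i → Commute (g i) (Xs j) := by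
    intro i j
    induction j with
    | zero => intro h; omega
    | succ n ih =>
      intro _ hji
      rcases Nat.eq_zero_or_pos n with hn | hn
      · subst hn
        rw [hXs1]
        exact hgX i (by omega)
      · rw [hXsrec n hn]
        have hgg : Commute (g i) (g n) := (hcomm n i hn (by omega)).symm
        exact (hgg.mul_right (ih hn (by omega))).mul_right hgg
  -- g i commutes with Xs j for j ≥ i + 2
  have hBhigh : ∀ i, 1 ≤ i → ∀ j, i + 2 ≤ j → Commute (g i) (Xs j) := by
    intro i hi j
    induction j with
    | zero => intro h; omega
    | succ n ih =>
      intro hj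
      rcases Nat.lt_or_ge n (i + 2) with h1 | h1
      · -- base case : n + 1 = i + 2, i.e. n = i + 1
        have hn : n = i + 1 := by omega
        subst hn
        rw [hXsrec (i+1) (by omega), hXsrec i hi]
        set a := g i with ha
        set b := g (i+1) with hb'
        set Y := Xs i with hY
        have hb : a * b * a = b * a * b := hbraid i hi
        have hcY : b * Y = Y * b := hBlow (i+1) i hi (by omega)
        show a * (b * (a*Y*a) * b) = b * (a*Y*a) * b * a
        calc a * (b * (a*Y*a) * b)
            = (a*b*a)*(Y*(a*b)) := by noncomm_ring
          _ = (b*a*b)*(Y*(a*b)) := by rw [hb]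
          _ = b*a*(b*Y)*(a*b) := by noncomm_ring
          _ = b*a*(Y*b)*(a*b) := by rw [hcY]
          _ = b*a*Y*(b*a*b) := by noncomm_ring
          _ = b*a*Y*(a*b*a) := by rw [← hb]
          _ = b * (a*Y*a) * b * a := by noncomm_ring
      · rw [hXsrec n (by omega)]
        have hgg : Commute (g i) (g n) := hcomm i n hi h1
        exact (hgg.mul_right (ih h1)).mul_right hgg
  -- the "four-term" relation at every level
  have hA : ∀ i, 1 ≤ i → g i * Xs i * g i * Xs i = Xs i * g i * Xs i * g i := by
    intro i
    induction i with
    | zero => intro h; omega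
    | succ n ih =>
      intro _
      rcases Nat.eq_zero_or_pos n with hn | hn
      · subst hn
        rw [hXs1]
        exact hfour
      · have h1n := ih hn
        rw [hXsrec n hn]
        set a := g n with ha
        set b := g (n+1) with hb'
        set Y := Xs n with hY
        have hb : a * b * a = b * a * b := hbraid n hn
        have hcY : b * Y = Y * b := hBlow (n+1) n hn (by omega)
        -- goal : b * (a*Y*a) * b * (a*Y*a) = a*Y*a * b * (a*Y*a) * b
        have hL : b * (a*Y*a) * b * (a*Y*a) = a*b*(Y*a*Y*a)*(b*a) := by
          calc b * (a*Y*a) * b * (a*Y*a)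
              = b*a*Y*(a*b*a)*Y*a := by noncomm_ring
            _ = b*a*Y*(b*a*b)*Y*a := by rw [hb]
            _ = b*a*(Y*b)*(a*b*Y*a) := by noncomm_ring
            _ = b*a*(b*Y)*(a*b*Y*a) := by rw [← hcY]
            _ = b*a*b*Y*a*(b*Y)*a := by noncomm_ring
            _ = b*a*b*Y*a*(Y*b)*a := by rw [hcY]
            _ = (b*a*b)*(Y*a*Y)*(b*a) := by noncomm_ring
            _ = (a*b*a)*(Y*a*Y)*(b*a) := by rw [← hb]
            _ = a*b*(a*Y*a*Y)*(b*a) := by noncomm_ring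
            _ = a*b*(Y*a*Y*a)*(b*a) := by rw [h1n]
        have hR : a*Y*a * b * (a*Y*a) * b = a*b*(Y*a*Y*a)*(b*a) := by
          calc a*Y*a * b * (a*Y*a) * b
              = a*Y*(a*b*a)*(Y*(a*b)) := by noncomm_ring
            _ = a*Y*(b*a*b)*(Y*(a*b)) := by rw [hb]
            _ = a*(Y*b)*(a*b*Y*a*b) := by noncomm_ring
            _ = a*(b*Y)*(a*b*Y*a*b) := by rw [← hcY]
            _ = a*b*Y*a*(b*Y)*(a*b) := by noncomm_ring
            _ = a*b*Y*a*(Y*b)*(a*b) := by rw [hcY]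
            _ = a*b*Y*a*Y*(b*a*b) := by noncomm_ring
            _ = a*b*Y*a*Y*(a*b*a) := by rw [← hb]
            _ = a*b*(Y*a*Y*a)*(b*a) := by noncomm_ring
        rw [hL, hR]
  -- Xs i commutes with Xs j for j ≥ i + 1
  have hC : ∀ i, 1 ≤ i → ∀ j, i + 1 ≤ j → Commute (Xs i) (Xs j) := by
    intro i hi j
    induction j with
    | zero => intro h; omega
    | succ n ih =>
      intro hj
      rcases Nat.lt_or_ge n (i + 1) with h1 | h1
      · -- base case n = i
        have hn : n = i := by omega
        subst hn
        rw [hXsrec n hi]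
        show Xs n * (g n * Xs n * g n) = g n * Xs n * g n * Xs n
        calc Xs n * (g n * Xs n * g n) = Xs n * g n * Xs n * g n := by noncomm_ring
          _ = g n * Xs n * g n * Xs n := (hA n hi).symm
      · rw [hXsrec n (by omega)]
        have hgx : Commute (Xs i) (g n) := (hBlow n i hi h1).symm
        exact (hgx.mul_right (ih h1)).mul_right hgx
  -- main statement
  intro i hi j hj
  rcases eq_or_ne j i with hji | hji
  · subst hji
    rw [if_pos rfl, hXsrec j hi]
    exact hecke_key1 (q - q⁻¹) (g j) (Xs j) (hA j hi) (hsq j hi)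
  · rcases eq_or_ne j (i + 1) with hji1 | hji1
    · subst hji1
      rw [if_neg hji, if_pos rfl, hXsrec i hi]
      exact hecke_key2 (q - q⁻¹) (g i) (Xs i) (hA i hi) (hsq i hi)
    · rw [if_neg hji, if_neg hji1]
      have hgx : Commute (g i) (Xs j) := by
        rcases Nat.lt_or_ge j i with h | h
        · exact hBlow i j hj (by omega)
        · exact hBhigh i hi j (by omega)
      have hxx : Commute (Xs i) (Xs j) := by
        rcases Nat.lt_or_ge j i with h | h
        · exact (hC j hj i (by omega)).symm
        · exact hC i hi j (by omega)
      have : Commute (Xs j) (Xs i * g i - g i * Xs i) :=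
        (hxx.symm.mul_right hgx.symm).sub_right (hgx.symm.mul_right hxx.symm)
      exact this.eq.symm
end

section
/- In the affine Hecke algebra, the intertwiners ĝ_i = [X_i, g_i] satisfy the braid relation ĝ_i ĝ_{i+1} ĝ_i = ĝ_{i+1} ĝ_i ĝ_{i+1}. -/
private lemma ahib_quad_rules {K : Type*} [Field K] {A : Type*} [Ring A] [Algebra K A]
    (c : K) (a x y : A) (hy : y = a * x * a) (ha : a * a = c • a + 1) :
    x * a = a * y - c • y ∧ y * a = a * x + c • y := by
  subst hy
  constructor
  · have h0 : a * (a * x * a) = a * (a * (x * a)) := by simp only [mul_assoc]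
    have h1 : a * (a * (x * a)) = c • (a * (x * a)) + x * a := by
      rw [← mul_assoc a a, ha, add_mul, smul_mul_assoc, one_mul]
    have h2 : c • (a * x * a) = c • (a * (x * a)) := by simp only [mul_assoc]
    rw [h0, h1, h2]; abel
  · have h0 : a * x * a * a = a * (x * (a * a)) := by simp only [mul_assoc]
    rw [h0, ha, mul_add, mul_one, mul_add, mul_smul_comm, mul_smul_comm]
    have h2 : c • (a * x * a) = c • (a * (x * a)) := by simp only [mul_assoc]
    rw [h2, ← mul_assoc, add_comm]

private lemma ahib_az {A : Type*} [Ring A] (a b x : A)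
    (hab : a * b * a = b * a * b) (hbx : b * x = x * b) :
    a * (b * (a * x * a) * b) = b * (a * x * a) * b * a := by
  have R1 : ∀ t : A, a * (b * (a * t)) = b * (a * (b * t)) := fun t => by
    rw [← mul_assoc, ← mul_assoc, hab, mul_assoc, mul_assoc]
  have R1e : a * (b * a) = b * (a * b) := by
    rw [← mul_assoc, hab, mul_assoc]
  have R2 : ∀ t : A, b * (x * t) = x * (b * t) := fun t => by
    rw [← mul_assoc, hbx, mul_assoc]
  simp only [mul_assoc]
  rw [R1, R2, ← R1e]

private lemma ahib_xz {A : Type*} [Ring A] (a b x : A)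
    (hbx : b * x = x * b) (hxx : x * (a * x * a) = a * x * a * x) :
    x * (b * (a * x * a) * b) = b * (a * x * a) * b * x := by
  have R2 : ∀ t : A, b * (x * t) = x * (b * t) := fun t => by
    rw [← mul_assoc, hbx, mul_assoc]
  have R3 : ∀ t : A, x * (a * (x * (a * t))) = a * (x * (a * (x * t))) := fun t => by
    rw [show x * (a * (x * (a * t))) = (x * (a * x * a)) * t by simp only [mul_assoc],
      hxx]; simp only [mul_assoc]
  simp only [mul_assoc]
  rw [← R2, R3, ← hbx]

private lemma ahib_comm_step {A : Type*} [Ring A] (a b x : A)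
    (hab : a * b * a = b * a * b) (hbx : b * x = x * b)
    (hxx : x * (a * x * a) = a * x * a * x) :
    (a * x * a) * (b * (a * x * a) * b) = b * (a * x * a) * b * (a * x * a) := by
  have R1 : ∀ t : A, a * (b * (a * t)) = b * (a * (b * t)) := fun t => by
    rw [← mul_assoc, ← mul_assoc, hab, mul_assoc, mul_assoc]
  have R1e : a * (b * a) = b * (a * b) := by
    rw [← mul_assoc, hab, mul_assoc]
  have R2 : ∀ t : A, b * (x * t) = x * (b * t) := fun t => by
    rw [← mul_assoc, hbx, mul_assoc]
  have R3 : ∀ t : A, x * (a * (x * (a * t))) = a * (x * (a * (x * t))) := fun t => by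
    rw [show x * (a * (x * (a * t))) = (x * (a * x * a)) * t by simp only [mul_assoc],
      hxx]; simp only [mul_assoc]
  simp only [mul_assoc]
  rw [R1, R2, ← R1e, ← R2, R3, ← R2, R1, R2, ← R1]

private lemma ahib_core {K : Type*} [Field K] {A : Type*} [Ring A] [Algebra K A]
    (c : K) (a b x y z : A)
    (r_xa : x*a = a*y - c•y) (r_ya : y*a = a*x + c•y) (r_za : z*a = a*z)
    (r_xb : x*b = b*x) (r_yb : y*b = b*z - c•z) (r_zb : z*b = b*y + c•z)
    (r_aa : a*a = c•a + 1) (r_bb : b*b = c•b + 1)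
    (r_bab : b*(a*b) = a*(b*a))
    (r_yx : y*x = x*y) (r_zx : z*x = x*z) (r_zy : z*y = y*z) :
    (x*a - a*x) * (y*b - b*y) * (x*a - a*x)
      = (y*b - b*y) * (x*a - a*x) * (y*b - b*y) := by
  have r_xa' : ∀ t : A, x*(a*t) = a*(y*t) - c•(y*t) := fun t => by
    rw [← mul_assoc, r_xa, sub_mul, smul_mul_assoc, mul_assoc]
  have r_ya' : ∀ t : A, y*(a*t) = a*(x*t) + c•(y*t) := fun t => by
    rw [← mul_assoc, r_ya, add_mul, smul_mul_assoc, mul_assoc]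
  have r_za' : ∀ t : A, z*(a*t) = a*(z*t) := fun t => by
    rw [← mul_assoc, r_za, mul_assoc]
  have r_xb' : ∀ t : A, x*(b*t) = b*(x*t) := fun t => by
    rw [← mul_assoc, r_xb, mul_assoc]
  have r_yb' : ∀ t : A, y*(b*t) = b*(z*t) - c•(z*t) := fun t => by
    rw [← mul_assoc, r_yb, sub_mul, smul_mul_assoc, mul_assoc]
  have r_zb' : ∀ t : A, z*(b*t) = b*(y*t) + c•(z*t) := fun t => by
    rw [← mul_assoc, r_zb, add_mul, smul_mul_assoc, mul_assoc]
  have r_aa' : ∀ t : A, a*(a*t) = c•(a*t) + t := fun t => by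
    rw [← mul_assoc, r_aa, add_mul, smul_mul_assoc, one_mul]
  have r_bb' : ∀ t : A, b*(b*t) = c•(b*t) + t := fun t => by
    rw [← mul_assoc, r_bb, add_mul, smul_mul_assoc, one_mul]
  have r_bab' : ∀ t : A, b*(a*(b*t)) = a*(b*(a*t)) := fun t => by
    rw [← mul_assoc, ← mul_assoc, show b*a*b = a*(b*a) by rw [← r_bab, mul_assoc],
      mul_assoc, mul_assoc]
  have r_yx' : ∀ t : A, y*(x*t) = x*(y*t) := fun t => by
    rw [← mul_assoc, r_yx, mul_assoc]
  have r_zx' : ∀ t : A, z*(x*t) = x*(z*t) := fun t => by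
    rw [← mul_assoc, r_zx, mul_assoc]
  have r_zy' : ∀ t : A, z*(y*t) = y*(z*t) := fun t => by
    rw [← mul_assoc, r_zy, mul_assoc]
  simp only [mul_sub, sub_mul, mul_add, add_mul, mul_assoc, smul_mul_assoc,
    mul_smul_comm, smul_smul, smul_add, smul_sub, mul_one, one_mul,
    r_xa, r_xa', r_ya, r_ya', r_za, r_za', r_xb, r_xb', r_yb, r_yb',
    r_zb, r_zb', r_aa, r_aa', r_bb, r_bb', r_bab, r_bab',
    r_yx, r_yx', r_zx, r_zx', r_zy, r_zy']
  abel

/-- the intertwiners `ĝ i = X i * g i - g i * X i` satisfy the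
braid relation `ĝ i * ĝ (i+1) * ĝ i = ĝ (i+1) * ĝ i * ĝ (i+1)`. -/
theorem affine_hecke_intertwiner_braid
    {K : Type*} [Field K] {A : Type*} [Ring A] [Algebra K A]
    (q : K) (hq : q ≠ 0)
    (X : A) (g : ℕ → A)
    (hbraid : ∀ i ≥ 1, g i * g (i + 1) * g i = g (i + 1) * g i * g (i + 1))
    (hcomm : ∀ i j, 1 ≤ i → i + 2 ≤ j → g i * g j = g j * g i)
    (hquad : ∀ i ≥ 1,
      (g i - algebraMap K A q) * (g i + algebraMap K A q⁻¹) = 0)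
    (hfour : g 1 * X * g 1 * X = X * g 1 * X * g 1)
    (hgX : ∀ j ≥ 2, g j * X = X * g j)
    (Xs : ℕ → A) (hXs1 : Xs 1 = X)
    (hXsrec : ∀ j ≥ 1, Xs (j + 1) = g j * Xs j * g j) :
    ∀ i ≥ 1,
      (Xs i * g i - g i * Xs i) *
          (Xs (i + 1) * g (i + 1) - g (i + 1) * Xs (i + 1)) *
          (Xs i * g i - g i * Xs i) =
        (Xs (i + 1) * g (i + 1) - g (i + 1) * Xs (i + 1)) *
          (Xs i * g i - g i * Xs i) *
          (Xs (i + 1) * g (i + 1) - g (i + 1) * Xs (i + 1)) := by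
  -- the quadratic relation in a convenient form
  have hsq : ∀ j, 1 ≤ j → g j * g j = (q - q⁻¹) • g j + 1 := by
    intro j hj
    have hqq : algebraMap K A q * algebraMap K A q⁻¹ = 1 := by
      rw [← map_mul, mul_inv_cancel₀ hq, map_one]
    have h := hquad j hj
    rw [sub_mul, mul_add, mul_add] at h
    rw [← Algebra.commutes] at h
    rw [hqq] at h
    have hs : (q - q⁻¹) • g j
        = algebraMap K A q * g j - algebraMap K A q⁻¹ * g j := by
      rw [Algebra.smul_def, map_sub, sub_mul]
    rw [hs]
    rw [sub_eq_zero] at h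
    have h2 : g j * g j = algebraMap K A q * g j + 1 - algebraMap K A q⁻¹ * g j := by
      rw [← h]; abel
    rw [h2]; abel
  -- g j commutes with Xs k for j ≥ k + 1
  have Hgx : ∀ k, 1 ≤ k → ∀ j, k + 1 ≤ j → g j * Xs k = Xs k * g j := by
    intro k
    induction k with
    | zero => omega
    | succ k IH =>
      intro _ j hj
      by_cases hk : k = 0
      · subst hk; rw [hXs1]; exact hgX j (by omega)
      · have hk1 : 1 ≤ k := by omega
        have h1 : g j * g k = g k * g j := (hcomm k j hk1 (by omega)).symm
        have h2 : g j * Xs k = Xs k * g j := IH hk1 j (by omega)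
        have A1 : ∀ t : A, g j * (g k * t) = g k * (g j * t) := fun t => by
          rw [← mul_assoc, h1, mul_assoc]
        have A2 : ∀ t : A, g j * (Xs k * t) = Xs k * (g j * t) := fun t => by
          rw [← mul_assoc, h2, mul_assoc]
        rw [hXsrec k hk1]
        simp only [mul_assoc]
        rw [A1, A2, h1]
  -- adjacent Xs commute
  have Hxx : ∀ k, 1 ≤ k → Xs k * Xs (k + 1) = Xs (k + 1) * Xs k := by
    intro k
    induction k with
    | zero => omega
    | succ k IH =>
      intro _
      by_cases hk : k = 0
      · subst hk
        show Xs 1 * Xs (1 + 1) = Xs (1 + 1) * Xs 1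
        rw [hXsrec 1 le_rfl, hXs1, hfour]
        simp only [mul_assoc]
      · have hk1 : 1 ≤ k := by omega
        have IH' := IH hk1
        rw [hXsrec k hk1] at IH'
        rw [hXsrec (k + 1) (by omega), hXsrec k hk1]
        exact ahib_comm_step (g k) (g (k + 1)) (Xs k) (hbraid k hk1)
          (Hgx k hk1 (k + 1) le_rfl) IH'
  intro i hi
  have hy := hXsrec i hi
  have hz := hXsrec (i + 1) (by omega)
  obtain ⟨r_xa, r_ya⟩ := ahib_quad_rules (q - q⁻¹) (g i) (Xs i) (Xs (i + 1)) hy (hsq i hi)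
  obtain ⟨r_yb, r_zb⟩ := ahib_quad_rules (q - q⁻¹) (g (i + 1)) (Xs (i + 1)) (Xs (i + 1 + 1))
    hz (hsq (i + 1) (by omega))
  have hbx : g (i + 1) * Xs i = Xs i * g (i + 1) := Hgx i hi (i + 1) le_rfl
  have hxy : Xs i * Xs (i + 1) = Xs (i + 1) * Xs i := Hxx i hi
  have hxyw := hxy
  rw [hy] at hxyw
  have hyz : Xs (i + 1) * Xs (i + 1 + 1) = Xs (i + 1 + 1) * Xs (i + 1) := Hxx (i + 1) (by omega)
  have r_za : Xs (i + 1 + 1) * g i = g i * Xs (i + 1 + 1) := by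
    rw [hz, hy]
    exact (ahib_az (g i) (g (i + 1)) (Xs i) (hbraid i hi) hbx).symm
  have r_zx : Xs (i + 1 + 1) * Xs i = Xs i * Xs (i + 1 + 1) := by
    rw [hz, hy]
    exact (ahib_xz (g i) (g (i + 1)) (Xs i) hbx hxyw).symm
  have r_bab : g (i + 1) * (g i * g (i + 1)) = g i * (g (i + 1) * g i) := by
    have h := hbraid i hi
    simp only [mul_assoc] at h
    exact h.symm
  exact ahib_core (q - q⁻¹) (g i) (g (i + 1)) (Xs i) (Xs (i + 1)) (Xs (i + 1 + 1))
    r_xa r_ya r_za hbx.symm r_yb r_zb (hsq i hi) (hsq (i + 1) (by omega)) r_bab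
    hxy.symm r_zx hyz.symm
end

section
/- In the cyclotomic Hecke algebra H(n,2), setting u_1 = g_1 - q and v = X - λ_1, the relations v u_1 v u_1 = (λ_1 q^{-1} - λ_2 q) v u_1 and u_1 v u_1 v = (λ_1 q^{-1} - λ_2 q) u_1 v hold in the quotient H^D(n,2) by the ideal generated by (X_1+X_2-(λ_1+λ_2))(g_1-q); in particular u_1 v u_1 = (λ_1 q^{-1} - λ_2 q) u_1. -/
private theorem HD_aux {K : Type*} [Field K] {A : Type*} [Ring A] [Algebra K A]
    (q l1 l2 : K) (hq : q ≠ 0) (X G : A)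
    (hquad : (G - algebraMap K A q) * (G + algebraMap K A q⁻¹) = 0)
    (hSigma : (X + G * X * G - algebraMap K A (l1 + l2)) *
      (G - algebraMap K A q) = 0) :
    (G - algebraMap K A q) * (X - algebraMap K A l1) * (G - algebraMap K A q) =
      (l1 * q⁻¹ - l2 * q) • (G - algebraMap K A q) := by
  set u := G - algebraMap K A q with hu
  have hqx : ∀ x : A, (q * q⁻¹) • x = x := fun x => by
    rw [mul_inv_cancel₀ hq, one_smul]
  have hgu : G * u = -(q⁻¹ • u) := by
    linear_combination (norm := (simp only [hu, Algebra.algebraMap_eq_smul_one, sub_mul, mul_sub, add_mul, mul_add, smul_mul_assoc, mul_smul_comm, smul_smul, one_mul, mul_one, mul_assoc, neg_mul, mul_neg, smul_neg, neg_smul]; module)) hquad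
  have hug : u * G = -(q⁻¹ • u) := by
    linear_combination (norm := (simp only [hu, Algebra.algebraMap_eq_smul_one, sub_mul, mul_sub, add_mul, mul_add, smul_mul_assoc, mul_smul_comm, smul_smul, one_mul, mul_one, mul_assoc, neg_mul, mul_neg, smul_neg, neg_smul]; module)) hquad
  have hGG : G * G = (q - q⁻¹) • G + 1 := by
    linear_combination (norm := (simp only [hu, Algebra.algebraMap_eq_smul_one, sub_mul, mul_sub, add_mul, mul_add, smul_mul_assoc, mul_smul_comm, smul_smul, one_mul, mul_one, mul_assoc, neg_mul, mul_neg, smul_neg, neg_smul]; module)) hquad + hqx (1 : A)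
  have hE1 : X * u + G * (X * (G * u)) = (l1 + l2) • u := by
    linear_combination (norm := (simp only [hu, Algebra.algebraMap_eq_smul_one, sub_mul, mul_sub, add_mul, mul_add, smul_mul_assoc, mul_smul_comm, smul_smul, one_mul, mul_one, mul_assoc, neg_mul, mul_neg, smul_neg, neg_smul]; module)) hSigma
  have hGXGu : G * (X * (G * u)) = (l1 + l2) • u - X * u := by
    linear_combination (norm := (simp only [hu, Algebra.algebraMap_eq_smul_one, sub_mul, mul_sub, add_mul, mul_add, smul_mul_assoc, mul_smul_comm, smul_smul, one_mul, mul_one, mul_assoc, neg_mul, mul_neg, smul_neg, neg_smul]; module)) hE1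
  have hXGu : X * (G * u) = -(q⁻¹ • (X * u)) := by
    linear_combination (norm := (simp only [hu, Algebra.algebraMap_eq_smul_one, sub_mul, mul_sub, add_mul, mul_add, smul_mul_assoc, mul_smul_comm, smul_smul, one_mul, mul_one, mul_assoc, neg_mul, mul_neg, smul_neg, neg_smul]; module)) X * hgu
  have hGXu : G * (X * u) = q • (X * u) - (q * (l1 + l2)) • u := by
    linear_combination (norm := (simp only [hu, Algebra.algebraMap_eq_smul_one, sub_mul, mul_sub, add_mul, mul_add, smul_mul_assoc, mul_smul_comm, smul_smul, one_mul, mul_one, mul_assoc, neg_mul, mul_neg, smul_neg, neg_smul]; module)) G * hE1 - hGG * (X * (G * u)) - (q - q⁻¹) • hGXGu - hXGu + (l1 + l2) • hgu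
  have huXu : u * (X * u) = -((q * (l1 + l2)) • u) := by
    linear_combination (norm := (simp only [hu, Algebra.algebraMap_eq_smul_one, sub_mul, mul_sub, add_mul, mul_add, smul_mul_assoc, mul_smul_comm, smul_smul, one_mul, mul_one, mul_assoc, neg_mul, mul_neg, smul_neg, neg_smul]; module)) hGXu
  have huu : u * u = -((q + q⁻¹) • u) := by
    linear_combination (norm := (simp only [hu, Algebra.algebraMap_eq_smul_one, sub_mul, mul_sub, add_mul, mul_add, smul_mul_assoc, mul_smul_comm, smul_smul, one_mul, mul_one, mul_assoc, neg_mul, mul_neg, smul_neg, neg_smul]; module)) hug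
  linear_combination (norm := (simp only [hu, Algebra.algebraMap_eq_smul_one, sub_mul, mul_sub, add_mul, mul_add, smul_mul_assoc, mul_smul_comm, smul_smul, one_mul, mul_one, mul_assoc, neg_mul, mul_neg, smul_neg, neg_smul]; module)) huXu - l1 • huu


/-- in the quotient H^D(n,2) of the cyclotomic Hecke algebra
H(n,2) by the ideal generated by `(X₁+X₂-(λ₁+λ₂))(g₁-q)` (i.e. in any algebra
satisfying the H(n,2) relations together with that relation), setting
`u₁ = g₁ - q` and `v = X - λ₁`, one has
`v u₁ v u₁ = (λ₁ q⁻¹ - λ₂ q) v u₁`, `u₁ v u₁ v = (λ₁ q⁻¹ - λ₂ q) u₁ v`,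
and in particular `u₁ v u₁ = (λ₁ q⁻¹ - λ₂ q) u₁`. -/
theorem HD_n2_blob_relations
    {K : Type*} [Field K] {A : Type*} [Ring A] [Algebra K A]
    (q lam1 lam2 : K) (hq : q ≠ 0)
    (X : A) (g : ℕ → A)
    (hbraid : ∀ i ≥ 1, g i * g (i + 1) * g i = g (i + 1) * g i * g (i + 1))
    (hcomm : ∀ i j, 1 ≤ i → i + 2 ≤ j → g i * g j = g j * g i)
    (hquad : ∀ i ≥ 1,
      (g i - algebraMap K A q) * (g i + algebraMap K A q⁻¹) = 0)
    (hcyc : (X - algebraMap K A lam1) * (X - algebraMap K A lam2) = 0)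
    (hfour : g 1 * X * g 1 * X = X * g 1 * X * g 1)
    (hgX : ∀ j ≥ 2, g j * X = X * g j)
    (hSigma : (X + g 1 * X * g 1 - algebraMap K A (lam1 + lam2)) *
        (g 1 - algebraMap K A q) = 0) :
    (X - algebraMap K A lam1) * (g 1 - algebraMap K A q) *
        (X - algebraMap K A lam1) * (g 1 - algebraMap K A q) =
      (lam1 * q⁻¹ - lam2 * q) •
        ((X - algebraMap K A lam1) * (g 1 - algebraMap K A q)) ∧
    (g 1 - algebraMap K A q) * (X - algebraMap K A lam1) *
        (g 1 - algebraMap K A q) * (X - algebraMap K A lam1) =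
      (lam1 * q⁻¹ - lam2 * q) •
        ((g 1 - algebraMap K A q) * (X - algebraMap K A lam1)) ∧
    (g 1 - algebraMap K A q) * (X - algebraMap K A lam1) *
        (g 1 - algebraMap K A q) =
      (lam1 * q⁻¹ - lam2 * q) • (g 1 - algebraMap K A q) := by
  have key := HD_aux q lam1 lam2 hq X (g 1) (hquad 1 le_rfl) hSigma
  refine ⟨?_, ?_, key⟩
  · calc (X - algebraMap K A lam1) * (g 1 - algebraMap K A q) *
        (X - algebraMap K A lam1) * (g 1 - algebraMap K A q)
        = (X - algebraMap K A lam1) *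
          ((g 1 - algebraMap K A q) * (X - algebraMap K A lam1) *
            (g 1 - algebraMap K A q)) := by noncomm_ring
      _ = (X - algebraMap K A lam1) *
          ((lam1 * q⁻¹ - lam2 * q) • (g 1 - algebraMap K A q)) := by rw [key]
      _ = (lam1 * q⁻¹ - lam2 * q) •
          ((X - algebraMap K A lam1) * (g 1 - algebraMap K A q)) := by
            rw [mul_smul_comm]
  · calc (g 1 - algebraMap K A q) * (X - algebraMap K A lam1) *
        (g 1 - algebraMap K A q) * (X - algebraMap K A lam1)
        = ((g 1 - algebraMap K A q) * (X - algebraMap K A lam1) *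
            (g 1 - algebraMap K A q)) * (X - algebraMap K A lam1) := by noncomm_ring
      _ = ((lam1 * q⁻¹ - lam2 * q) • (g 1 - algebraMap K A q)) *
            (X - algebraMap K A lam1) := by rw [key]
      _ = (lam1 * q⁻¹ - lam2 * q) •
          ((g 1 - algebraMap K A q) * (X - algebraMap K A lam1)) := by
            rw [smul_mul_assoc]
end

section
/- Let w' be the reflection of a walk w in the hyperplane (i,j;x) at step l. Then every non-zero entry of the difference λ^w − λ^{w'} is of the form ±q^{2α}(λ_i − q^{−2x}λ_j) for some integer α. -/
/- STATEMENT 14: if w' is the reflection of a walk w in the hyperplane (i,j;x)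
at a touching step l, then every non-zero entry of λ^w - λ^{w'} is of the form
± q^{2α}(λ_i - q^{-2x} λ_j). -/

noncomputable section

open MvPolynomial

/-- The ring ℤ[q,q⁻¹][λ_1,...,λ_d]: λ's are the MvPolynomial variables, q is
the Laurent variable `T 1`. -/
abbrev WalkRing (d : ℕ) : Type := MvPolynomial (Fin d) (LaurentPolynomial ℤ)

/-- `wcount w l i` = number of steps among the first `l` steps of the walk `w`
that are equal to `i` (the quantity #_l(i)). -/
def wcount {n d : ℕ} (w : Fin n → Fin d) (l : ℕ) (i : Fin d) : ℕ :=
  (Finset.univ.filter (fun s : Fin n => (s : ℕ) < l ∧ w s = i)).card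

/-- The sequence λ^w associated to a walk w:
`(λ^w)_t = λ_{w_t} q^{2(#_t(w_t) - 1)}`. -/
def lamWalk {n d : ℕ} (w : Fin n → Fin d) (t : Fin n) : WalkRing d :=
  MvPolynomial.C (LaurentPolynomial.T (2 * ((wcount w ((t : ℕ) + 1) (w t) : ℤ) - 1))) * X (w t)

private lemma wcount_congr {n d : ℕ} (u v : Fin n → Fin d) (m : ℕ) (c : Fin d)
    (h : ∀ s : Fin n, (s : ℕ) < m → u s = v s) : wcount u m c = wcount v m c := by
  unfold wcount
  congr 1
  ext s
  simp only [Finset.mem_filter, Finset.mem_univ, true_and]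
  constructor
  · rintro ⟨h1, h2⟩
    exact ⟨h1, by rw [← h s h1]; exact h2⟩
  · rintro ⟨h1, h2⟩
    exact ⟨h1, by rw [h s h1]; exact h2⟩

private lemma wcount_mid {n d : ℕ} (u : Fin n → Fin d) (l m : ℕ) (h : l ≤ m) (c : Fin d) :
    wcount u m c = wcount u l c +
      ((Finset.univ.filter (fun s : Fin n => l ≤ (s : ℕ) ∧ (s : ℕ) < m ∧ u s = c)).card) := by
  unfold wcount
  rw [← Finset.card_union_of_disjoint]
  · congr 1
    ext s
    simp only [Finset.mem_filter, Finset.mem_union, Finset.mem_univ, true_and]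
    constructor
    · rintro ⟨hm, hc⟩
      rcases lt_or_ge (s : ℕ) l with h' | h'
      · exact Or.inl ⟨h', hc⟩
      · exact Or.inr ⟨h', hm, hc⟩
    · rintro (⟨h1, h2⟩ | ⟨h1, h2, h3⟩)
      · exact ⟨lt_of_lt_of_le h1 h, h2⟩
      · exact ⟨h2, h3⟩
  · apply Finset.disjoint_left.mpr
    intro s hs1 hs2
    simp only [Finset.mem_filter, Finset.mem_univ, true_and] at hs1 hs2
    exact absurd hs2.1 (not_le.mpr hs1.1)

theorem walk_reflection_difference {n d : ℕ} (w : Fin n → Fin d)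
    (i j : Fin d) (hij : i ≠ j) (x : ℤ) (l : ℕ)
    (htouch : (wcount w l i : ℤ) - (wcount w l j : ℤ) = x)
    (w' : Fin n → Fin d)
    (hw' : ∀ t : Fin n,
      w' t = if l ≤ (t : ℕ) then Equiv.swap i j (w t) else w t) :
    ∀ t : Fin n,
      lamWalk w t - lamWalk w' t = 0 ∨
      ∃ α : ℤ,
        lamWalk w t - lamWalk w' t =
            MvPolynomial.C (LaurentPolynomial.T (2 * α)) * (X i - MvPolynomial.C (LaurentPolynomial.T (-2 * x)) * X j) ∨
        lamWalk w t - lamWalk w' t =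
            -(MvPolynomial.C (LaurentPolynomial.T (2 * α)) * (X i - MvPolynomial.C (LaurentPolynomial.T (-2 * x)) * X j)) := by
  -- the middle-segment counts agree after swapping letters
  have hmid : ∀ (m : ℕ) (c : Fin d),
      (Finset.univ.filter (fun s : Fin n => l ≤ (s : ℕ) ∧ (s : ℕ) < m ∧ w' s = c)).card =
      (Finset.univ.filter (fun s : Fin n => l ≤ (s : ℕ) ∧ (s : ℕ) < m ∧
        w s = Equiv.swap i j c)).card := by
    intro m c
    congr 1
    ext s
    simp only [Finset.mem_filter, Finset.mem_univ, true_and]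
    constructor
    · rintro ⟨h1, h2, h3⟩
      refine ⟨h1, h2, ?_⟩
      rw [hw' s, if_pos h1] at h3
      have := congrArg (Equiv.swap i j) h3
      rwa [Equiv.swap_apply_self] at this
    · rintro ⟨h1, h2, h3⟩
      exact ⟨h1, h2, by rw [hw' s, if_pos h1, h3, Equiv.swap_apply_self]⟩
  have hlow : ∀ c : Fin d, wcount w' l c = wcount w l c := fun c =>
    wcount_congr w' w l c (fun s hs => by rw [hw' s, if_neg (not_le.mpr hs)])
  have hkey : ∀ (m : ℕ), l ≤ m → ∀ c : Fin d, (wcount w' m c : ℤ) =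
      (wcount w l c : ℤ) + (wcount w m (Equiv.swap i j c) : ℤ)
        - (wcount w l (Equiv.swap i j c) : ℤ) := by
    intro m hm c
    have h1 := wcount_mid w' l m hm c
    have h2 := wcount_mid w l m hm (Equiv.swap i j c)
    rw [hlow c, hmid m c] at h1
    omega
  intro t
  by_cases hlt : l ≤ (t : ℕ)
  · have hsucc : l ≤ (t : ℕ) + 1 := le_trans hlt (Nat.le_succ _)
    by_cases hci : w t = i
    · -- w t = i, w' t = j
      right
      refine ⟨(wcount w ((t : ℕ) + 1) i : ℤ) - 1, Or.inl ?_⟩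
      have hwt' : w' t = j := by rw [hw' t, if_pos hlt, hci, Equiv.swap_apply_left]
      have hc : (wcount w' ((t : ℕ) + 1) j : ℤ) = (wcount w ((t : ℕ) + 1) i : ℤ) - x := by
        have := hkey ((t : ℕ) + 1) hsucc j
        rw [Equiv.swap_apply_right] at this
        rw [this]
        linarith
      unfold lamWalk
      rw [hwt', hci, hc]
      have he : (2 : ℤ) * ((wcount w ((t : ℕ) + 1) i : ℤ) - x - 1)
          = 2 * ((wcount w ((t : ℕ) + 1) i : ℤ) - 1) + (-2 * x) := by ring
      rw [he, LaurentPolynomial.T_add, map_mul]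
      ring
    · by_cases hcj : w t = j
      · -- w t = j, w' t = i
        right
        refine ⟨(wcount w ((t : ℕ) + 1) j : ℤ) + x - 1, Or.inr ?_⟩
        have hwt' : w' t = i := by rw [hw' t, if_pos hlt, hcj, Equiv.swap_apply_right]
        have hc : (wcount w' ((t : ℕ) + 1) i : ℤ) = (wcount w ((t : ℕ) + 1) j : ℤ) + x := by
          have := hkey ((t : ℕ) + 1) hsucc i
          rw [Equiv.swap_apply_left] at this
          rw [this]
          linarith
        unfold lamWalk
        rw [hwt', hcj, hc]
        have he : (2 : ℤ) * ((wcount w ((t : ℕ) + 1) j : ℤ) - 1)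
            = 2 * ((wcount w ((t : ℕ) + 1) j : ℤ) + x - 1) + (-2 * x) := by ring
        rw [he, LaurentPolynomial.T_add, map_mul]
        ring
      · -- w t is fixed by the swap
        left
        have hwt' : w' t = w t := by
          rw [hw' t, if_pos hlt, Equiv.swap_apply_of_ne_of_ne hci hcj]
        have hc : (wcount w' ((t : ℕ) + 1) (w t) : ℤ) = (wcount w ((t : ℕ) + 1) (w t) : ℤ) := by
          have := hkey ((t : ℕ) + 1) hsucc (w t)
          rw [Equiv.swap_apply_of_ne_of_ne hci hcj] at this
          rw [this]
          ring
        unfold lamWalk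
        rw [hwt', hc]
        ring
  · -- t is before the reflection step
    left
    have hwt' : w' t = w t := by rw [hw' t, if_neg hlt]
    have hc : wcount w' ((t : ℕ) + 1) (w t) = wcount w ((t : ℕ) + 1) (w t) :=
      wcount_congr w' w _ _ (fun s hs => by
        rw [hw' s, if_neg (by omega)])
    unfold lamWalk
    rw [hwt', hc]
    ring

end
end

section
/- Let G be the reflection group generated by a set of hyperplanes of the form (i,j;x), with factor set F(G) = {λ_i − q^{−2x}λ_j : (i,j;x) a simple reflection of G}. Two walks w, w' are in the same walk orbit of G if and only if every non-zero entry of λ^w − λ^{w'} is divisible by an element of F(G). -/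
noncomputable section

open MvPolynomial

/-- The set of (simple) reflection hyperplanes of the reflection group generated
by the hyperplanes in `S`: closed under inversion `(i,j;x) ↦ (j,i;-x)` and
composition `(i,j;x)∘(j,k;y) = (i,k;x+y)`. -/
inductive HypCl {d : ℕ} (S : Set (Fin d × Fin d × ℤ)) : Fin d → Fin d → ℤ → Prop where
  | base {i j : Fin d} {x : ℤ} : (i, j, x) ∈ S → HypCl S i j x
  | symm {i j : Fin d} {x : ℤ} : HypCl S i j x → HypCl S j i (-x)
  | comp {i j k : Fin d} {x y : ℤ} :
      HypCl S i j x → HypCl S j k y → HypCl S i k (x + y)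

/-- One-step relation: `w'` is obtained from `w` by a reflection in a hyperplane
of the group generated by `S`, at a touching step. -/
def stepRefl {n d : ℕ} (S : Set (Fin d × Fin d × ℤ)) (w w' : Fin n → Fin d) : Prop :=
  ∃ (i j : Fin d) (x : ℤ) (l : ℕ),
    HypCl S i j x ∧
    (wcount w l i : ℤ) - (wcount w l j : ℤ) = x ∧
    ∀ t : Fin n, w' t = if l ≤ (t : ℕ) then Equiv.swap i j (w t) else w t

/-!
The `t`-th entry of `λ^w` is the monomial `q^c λ_a`, where `a = w_t` and `c` is twice the number
of earlier steps equal to `a`. Reflecting `w` at a step `l` touching `(i,j;x)` leaves the entries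
before `l` alone and, after `l`, turns an entry `q^c λ_i` into `q^(c-2x) λ_j` (and vice versa), so
entries of walks in one orbit are related by hyperplanes of the group. Conversely, if all entries
are related, look at the first step where the walks differ: the relation between the two entries
there says exactly that the first walk touches the corresponding hyperplane at that step, and the
reflection in it lengthens the common prefix.

On the algebraic side, `λ_i - q^(-2x) λ_j` divides `q^c λ_a - q^c' λ_b` iff the difference
vanishes under `λ_i ↦ q^(-2x) λ_j`, which for `i ≠ j` forces `{a, b} = {i, j}` and `c - c' = ±2x`.
For a loop `(i,i;x)` the factor is `(1 - q^(-2x)) λ_i`, and `1 - q^(-2x) ∣ q^c - q^c'` means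
`2x ∣ c - c'`; multiples of a loop are again loops of the group.
-/

namespace WalkOrbit

open LaurentPolynomial

variable {n d : ℕ}

lemma wcount_congr {w v : Fin n → Fin d} {m : ℕ} (h : ∀ s : Fin n, (s : ℕ) < m → w s = v s)
    (a : Fin d) : wcount w m a = wcount v m a := by
  unfold wcount
  congr 1
  exact Finset.filter_congr fun s _ => and_congr_right fun hs => by rw [h s hs]

lemma wcount_succ (w : Fin n → Fin d) (t : Fin n) (a : Fin d) :
    wcount w ((t : ℕ) + 1) a = wcount w t a + if w t = a then 1 else 0 := by
  simp only [wcount, Finset.card_filter]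
  rw [← Fintype.sum_ite_eq' t (fun s => if w s = a then 1 else 0), ← Finset.sum_add_distrib]
  refine Finset.sum_congr rfl fun s _ => ?_
  simp only [Fin.ext_iff]
  split_ifs <;> omega

lemma wcount_reflect {σ : Equiv.Perm (Fin d)} {l m : ℕ} {w w' : Fin n → Fin d}
    (hw' : ∀ s : Fin n, w' s = if l ≤ (s : ℕ) then σ (w s) else w s) (hlm : l ≤ m) (b : Fin d) :
    wcount w' m (σ b) + wcount w l b = wcount w m b + wcount w l (σ b) := by
  simp only [wcount, Finset.card_filter, ← Finset.sum_add_distrib]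
  refine Finset.sum_congr rfl fun s _ => ?_
  by_cases hl : l ≤ (s : ℕ)
  · simp only [hw' s, if_pos hl, σ.injective.eq_iff]
    split_ifs <;> grind
  · simp only [hw' s, if_neg hl]
    split_ifs <;> grind

def lamData (w : Fin n → Fin d) (t : Fin n) : Fin d × ℤ :=
  (w t, 2 * ((wcount w ((t : ℕ) + 1) (w t) : ℤ) - 1))

lemma lamData_eq (w : Fin n → Fin d) (t : Fin n) :
    lamData w t = (w t, 2 * (wcount w t (w t) : ℤ)) := by
  simp only [lamData, wcount_succ]
  push_cast
  ring_nf

def mono (p : Fin d × ℤ) : WalkRing d := MvPolynomial.C (T p.2) * X p.1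

lemma lamWalk_eq_mono (w : Fin n → Fin d) (t : Fin n) : lamWalk w t = mono (lamData w t) := rfl

lemma mono_eq_monomial (p : Fin d × ℤ) : mono p = monomial (Finsupp.single p.1 1) (T p.2) :=
  C_mul_X_eq_monomial

lemma mono_injective : Function.Injective (mono : Fin d × ℤ → WalkRing d) := by
  rintro ⟨a, c⟩ ⟨b, c'⟩ h
  rw [mono_eq_monomial, mono_eq_monomial, monomial_eq_monomial_iff] at h
  rcases h with ⟨ha, hc⟩ | ⟨hc, -⟩
  · refine Prod.ext (Finsupp.single_left_injective one_ne_zero ha) ?_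
    exact AddMonoidAlgebra.single_left_injective one_ne_zero hc
  · exact absurd hc (isUnit_T c).ne_zero

lemma mono_ne_zero (p : Fin d × ℤ) : mono p ≠ 0 := by
  rw [mono_eq_monomial, Ne, monomial_eq_zero]
  exact (isUnit_T _).ne_zero

/-- Exponents are read modulo `e` through `ℤ[T;T⁻¹] → ℤ[ℤ/|e|]`, which kills `1 - T e`. -/
theorem dvd_sub_of_one_sub_T_dvd {e c c' : ℤ} (h : (1 - T e : ℤ[T;T⁻¹]) ∣ T c - T c') :
    e ∣ c - c' := by
  let φ : ℤ[T;T⁻¹] →+* AddMonoidAlgebra ℤ (ZMod e.natAbs) :=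
    AddMonoidAlgebra.mapDomainRingHom ℤ (Int.castAddHom _)
  have hφ : ∀ a : ℤ, φ (T a) = AddMonoidAlgebra.single (a : ZMod e.natAbs) 1 := fun _ =>
    AddMonoidAlgebra.mapDomain_single
  have he : (e : ZMod e.natAbs) = 0 :=
    (ZMod.intCast_zmod_eq_zero_iff_dvd _ _).2 (Int.natAbs_dvd.2 dvd_rfl)
  have hdvd := map_dvd φ h
  rw [map_sub, map_one, hφ, he, ← AddMonoidAlgebra.one_def, sub_self, zero_dvd_iff, map_sub,
    sub_eq_zero, hφ, hφ] at hdvd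
  have hcc := AddMonoidAlgebra.single_left_injective one_ne_zero hdvd
  rw [ZMod.intCast_eq_intCast_iff_dvd_sub, Int.natAbs_dvd] at hcc
  exact (dvd_sub_comm).1 hcc

theorem eq_or_swap_of_dvd_mono_sub {i j : Fin d} (hij : i ≠ j) {e : ℤ} {p p' : Fin d × ℤ}
    (h : X i - MvPolynomial.C (T e) * X j ∣ mono p - mono p') :
    p = p' ∨ (p.1 = i ∧ p'.1 = j ∧ p'.2 = p.2 + e) ∨ (p.1 = j ∧ p'.1 = i ∧ p.2 = p'.2 + e) := by
  let φ := aeval (R := ℤ[T;T⁻¹]) (Function.update X i (MvPolynomial.C (T e) * X j : WalkRing d))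
  have hφ : ∀ q : Fin d × ℤ, φ (mono q) = mono (if q.1 = i then (j, q.2 + e) else q) := by
    rintro ⟨a, c⟩
    by_cases ha : a = i
    · subst ha
      simp only [φ, mono, map_mul, aeval_C, algebraMap_eq, aeval_X, Function.update_self,
        if_true, T_add, mul_assoc]
    · simp [φ, mono, ha, Function.update_of_ne]
  have hdvd := map_dvd φ h
  rw [map_sub, map_mul, aeval_X, aeval_X, Function.update_self,
    Function.update_of_ne hij.symm, aeval_C, algebraMap_eq, sub_self, zero_dvd_iff, map_sub,
    sub_eq_zero, hφ, hφ] at hdvd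
  have := mono_injective hdvd
  obtain ⟨a, c⟩ := p
  obtain ⟨b, c'⟩ := p'
  split_ifs at this <;> simp_all [Prod.ext_iff]

/-- Setting `λ_i = 0` kills the factor; if both monomials involve `λ_i`, setting every `λ` to `1`
leaves `1 - T e ∣ T c - T c'`. -/
theorem eq_or_dvd_of_dvd_mono_sub_self {i : Fin d} {e : ℤ} {p p' : Fin d × ℤ}
    (h : X i - MvPolynomial.C (T e) * X i ∣ mono p - mono p') :
    p = p' ∨ (p.1 = i ∧ p'.1 = i ∧ e ∣ p.2 - p'.2) := by
  let φ := aeval (R := ℤ[T;T⁻¹]) (Function.update X i (0 : WalkRing d))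
  have hφ : ∀ q : Fin d × ℤ, φ (mono q) = if q.1 = i then 0 else mono q := by
    rintro ⟨a, c⟩
    by_cases ha : a = i
    · simp [φ, mono, ha]
    · simp [φ, mono, ha, Function.update_of_ne]
  have hdvd := map_dvd φ h
  rw [map_sub, map_mul, aeval_X, Function.update_self, mul_zero, sub_self, zero_dvd_iff, map_sub,
    sub_eq_zero, hφ, hφ] at hdvd
  by_cases ha : p.1 = i <;> by_cases hb : p'.1 = i
  · refine Or.inr ⟨ha, hb, dvd_sub_of_one_sub_T_dvd ?_⟩
    obtain ⟨a, c⟩ := p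
    obtain ⟨b, c'⟩ := p'
    dsimp only at ha hb
    subst ha hb
    simpa [mono] using map_dvd (aeval (R := ℤ[T;T⁻¹]) fun _ : Fin d => (1 : ℤ[T;T⁻¹])) h
  · rw [if_pos ha, if_neg hb] at hdvd
    exact absurd hdvd.symm (mono_ne_zero _)
  · rw [if_neg ha, if_pos hb] at hdvd
    exact absurd hdvd (mono_ne_zero _)
  · rw [if_neg ha, if_neg hb] at hdvd
    exact Or.inl (mono_injective hdvd)

def EntryRel (S : Set (Fin d × Fin d × ℤ)) (p p' : Fin d × ℤ) : Prop :=
  p = p' ∨ ∃ x : ℤ, HypCl S p.1 p'.1 x ∧ p.2 - p'.2 = 2 * x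

variable {S : Set (Fin d × Fin d × ℤ)}

theorem _root_.HypCl.loop_mul {i : Fin d} {x : ℤ} (h : HypCl S i i x) (k : ℤ) :
    HypCl S i i (k * x) := by
  induction k using Int.induction_on with
  | zero => simpa using h.comp h.symm
  | succ k ih => simpa [add_mul] using ih.comp h
  | pred k ih => convert ih.comp h.symm using 1; ring

theorem entryRel_equivalence : Equivalence (EntryRel S) where
  refl _ := Or.inl rfl
  symm := by
    rintro p p' (rfl | ⟨x, hx, hc⟩)
    exacts [Or.inl rfl, Or.inr ⟨-x, hx.symm, by omega⟩]
  trans := by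
    rintro p p' p'' (rfl | ⟨x, hx, hc⟩) (rfl | ⟨y, hy, hc'⟩)
    exacts [Or.inl rfl, Or.inr ⟨y, hy, hc'⟩, Or.inr ⟨x, hx, hc⟩,
      Or.inr ⟨x + y, hx.comp hy, by omega⟩]

theorem entryRel_iff_dvd {p p' : Fin d × ℤ} :
    EntryRel S p p' ↔ mono p - mono p' = 0 ∨ ∃ (i j : Fin d) (x : ℤ),
      HypCl S i j x ∧ (X i - MvPolynomial.C (T (-2 * x)) * X j) ∣ (mono p - mono p') := by
  constructor
  · rintro (rfl | ⟨x, hx, hc⟩)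
    · exact Or.inl (sub_self _)
    refine Or.inr ⟨p.1, p'.1, x, hx, MvPolynomial.C (T p.2), ?_⟩
    rw [mono, mono, show p'.2 = p.2 + -2 * x by omega, T_add, map_mul]
    ring
  · rintro (h | ⟨i, j, x, hx, hdvd⟩)
    · exact Or.inl (mono_injective (sub_eq_zero.1 h))
    by_cases hij : i = j
    · subst hij
      rcases eq_or_dvd_of_dvd_mono_sub_self hdvd with rfl | ⟨ha, hb, k, hk⟩
      · exact Or.inl rfl
      · exact Or.inr ⟨-k * x, by rw [ha, hb]; exact hx.loop_mul (-k), by rw [hk]; ring⟩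
    · rcases eq_or_swap_of_dvd_mono_sub hij hdvd with rfl | ⟨ha, hb, hc⟩ | ⟨ha, hb, hc⟩
      · exact Or.inl rfl
      · exact Or.inr ⟨x, by rwa [ha, hb], by omega⟩
      · exact Or.inr ⟨-x, by rw [ha, hb]; exact hx.symm, by omega⟩

theorem entryRel_of_stepRefl {w w' : Fin n → Fin d} (h : stepRefl S w w') (t : Fin n) :
    EntryRel S (lamData w t) (lamData w' t) := by
  obtain ⟨i, j, x, l, hH, htouch, hw'⟩ := h
  by_cases htl : (t : ℕ) < l
  · have hpre : ∀ s : Fin n, (s : ℕ) < t + 1 → w' s = w s := fun s hs => by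
      rw [hw' s, if_neg (by omega)]
    left
    simp only [lamData, wcount_congr hpre, hpre t (by omega)]
  have hwt : w' t = Equiv.swap i j (w t) := by rw [hw' t, if_pos (by omega)]
  have hcount := wcount_reflect hw' (m := t) (by omega) (w t)
  rw [lamData_eq, lamData_eq, hwt]
  unfold EntryRel
  dsimp only
  by_cases hi : w t = i
  · rw [hi, Equiv.swap_apply_left] at hcount ⊢
    exact Or.inr ⟨x, hH, by omega⟩
  by_cases hj : w t = j
  · rw [hj, Equiv.swap_apply_right] at hcount ⊢
    exact Or.inr ⟨-x, hH.symm, by omega⟩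
  rw [Equiv.swap_apply_of_ne_of_ne hi hj] at hcount ⊢
  exact Or.inl (Prod.ext rfl (by dsimp only; omega))

theorem entryRel_of_eqvGen {w w' : Fin n → Fin d} (h : Relation.EqvGen (stepRefl S) w w')
    (t : Fin n) : EntryRel S (lamData w t) (lamData w' t) := by
  induction h with
  | rel _ _ hstep => exact entryRel_of_stepRefl hstep t
  | refl _ => exact entryRel_equivalence.refl _
  | symm _ _ _ ih => exact entryRel_equivalence.symm ih
  | trans _ _ _ _ _ ih ih' => exact entryRel_equivalence.trans ih ih'

theorem eqvGen_of_entryRel_of_prefix (m : ℕ) {w w' : Fin n → Fin d}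
    (hpre : ∀ s : Fin n, (s : ℕ) < m → w s = w' s)
    (hrel : ∀ t, EntryRel S (lamData w t) (lamData w' t)) : Relation.EqvGen (stepRefl S) w w' := by
  by_cases hm : n ≤ m
  · rw [funext fun s => hpre s (by omega)]
    exact .refl _
  obtain ⟨t, rfl⟩ : ∃ t : Fin n, (t : ℕ) = m := ⟨⟨m, by omega⟩, rfl⟩
  have hpre_succ : ∀ {v : Fin n → Fin d}, (∀ s : Fin n, (s : ℕ) < t → v s = w' s) → v t = w' t →
      ∀ s : Fin n, (s : ℕ) < t + 1 → v s = w' s := fun hv ht s hs => by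
    rcases Nat.lt_succ_iff_lt_or_eq.1 hs with hs | hs
    exacts [hv s hs, Fin.ext hs ▸ ht]
  by_cases hwt : w t = w' t
  · exact eqvGen_of_entryRel_of_prefix (t + 1) (hpre_succ hpre hwt) hrel
  obtain ⟨x, hx, hc⟩ := (hrel t).resolve_left fun h => hwt (congrArg Prod.fst h)
  have htouch : (wcount w t (w t) : ℤ) - wcount w t (w' t) = x := by
    rw [lamData_eq, lamData_eq, ← wcount_congr hpre] at hc
    dsimp only at hc
    omega
  let v : Fin n → Fin d := fun s => if (t : ℕ) ≤ s then Equiv.swap (w t) (w' t) (w s) else w s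
  have hstep : stepRefl S w v := ⟨w t, w' t, x, t, hx, htouch, fun _ => rfl⟩
  have hvpre : ∀ s : Fin n, (s : ℕ) < t → v s = w' s := fun s hs => by
    simp only [v, if_neg (Nat.not_le.2 hs), hpre s hs]
  have hvt : v t = w' t := by simp [v]
  exact .trans _ _ _ (.rel _ _ hstep) (eqvGen_of_entryRel_of_prefix (t + 1) (hpre_succ hvpre hvt)
    fun s => entryRel_equivalence.trans (entryRel_equivalence.symm (entryRel_of_stepRefl hstep s))
      (hrel s))
termination_by n - m

end WalkOrbit

theorem walk_orbit_iff_divisible_general {n d : ℕ} (S : Set (Fin d × Fin d × ℤ))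
    (w w' : Fin n → Fin d) :
    Relation.EqvGen (stepRefl S) w w' ↔
      ∀ t : Fin n,
        lamWalk w t - lamWalk w' t = 0 ∨
        ∃ (i j : Fin d) (x : ℤ),
          HypCl S i j x ∧
          (X i - MvPolynomial.C (LaurentPolynomial.T (-2 * x)) * X j) ∣
            (lamWalk w t - lamWalk w' t) := by
  simp only [WalkOrbit.lamWalk_eq_mono, ← WalkOrbit.entryRel_iff_dvd]
  exact ⟨fun h t => WalkOrbit.entryRel_of_eqvGen h t,
    WalkOrbit.eqvGen_of_entryRel_of_prefix 0 fun _ h => absurd h (Nat.not_lt_zero _)⟩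

/-- two walks `w`, `w'` (on hyperplanes `(i,j;x)` with i ≠ j and
x ≠ 0) are in the same walk orbit of the group generated by `S` iff every
non-zero entry of λ^w - λ^{w'} is divisible by a factor
`λ_i - q^{-2x} λ_j` with `(i,j;x)` a reflection of the group. -/
theorem walk_orbit_iff_divisible {n d : ℕ} (S : Set (Fin d × Fin d × ℤ))
    (hS : ∀ p ∈ S, p.1 ≠ p.2.1 ∧ p.2.2 ≠ 0)
    (w w' : Fin n → Fin d) :
    Relation.EqvGen (stepRefl S) w w' ↔
      ∀ t : Fin n,
        lamWalk w t - lamWalk w' t = 0 ∨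
        ∃ (i j : Fin d) (x : ℤ),
          HypCl S i j x ∧
          (X i - MvPolynomial.C (LaurentPolynomial.T (-2 * x)) * X j) ∣
            (lamWalk w t - lamWalk w' t) :=
  walk_orbit_iff_divisible_general S w w'
end
end
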